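/- Let Γ be a connected negative definite plumbing tree, u an end-vertex, Γ∖u the deleted graph, and R the restriction map. Then for any l'' ∈ L'(Γ): l'' = i(R(l'')) + ((l'', E_u^*)/(E_u^*, E_u^*)) · E_u^*, and (i(l), E_u^*) = 0 for every l ∈ L'(Γ∖u). Moreover K_{Γ∖u} = R(K_Γ). -/

import Mathlib

open scoped BigOperators Matrix

section Defs

variable {V : Type*} [Fintype V] [DecidableEq V]

/-- The bilinear pairing `(x, y) = xᵀ M y` over `ℚ`, for an integer matrix `M`. -/
def pairing (M : Matrix V V ℤ) (x y : V → ℚ) : ℚ :=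
  x ⬝ᵥ (M.map fun m => (m : ℚ)).mulVec y

def NegDefinite (M : Matrix V V ℤ) : Prop :=
  ∀ x : V → ℚ, x ≠ 0 → pairing M x x < 0

def baseE (v : V) : V → ℚ := Pi.single v 1

/-- `Estar v` is the antidual basis: `(E_v^*, E_w) = -δ_{vw}`. -/
def IsAntidual (M : Matrix V V ℤ) (Estar : V → V → ℚ) : Prop :=
  ∀ v w, pairing M (Estar v) (baseE w) = if v = w then -1 else 0

def IsPlumbing (M : Matrix V V ℤ) : Prop :=
  M.IsSymm ∧ NegDefinite M ∧ (∀ v w, v ≠ w → M v w = 0 ∨ M v w = 1) ∧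
    (SimpleGraph.fromRel fun v w => M v w = 1).Connected

/-- The valency (number of neighbours) of a vertex. -/
def valency (M : Matrix V V ℤ) (v : V) : ℕ :=
  (Finset.univ.filter fun w => w ≠ v ∧ M v w = 1).card

def IsPlumbingTree (M : Matrix V V ℤ) : Prop :=
  IsPlumbing M ∧ ∑ v, valency M v = 2 * (Fintype.card V - 1)

/-- `k` is a characteristic element: `k ∈ L'` and `(k + l, l) ∈ 2ℤ` for all `l ∈ L`. -/
def IsChar (M : Matrix V V ℤ) (k : V → ℚ) : Prop :=
  (∀ v, ∃ m : ℤ, pairing M k (baseE v) = m) ∧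
  ∀ l : V → ℤ, ∃ m : ℤ, pairing M (k + fun v => (l v : ℚ)) (fun v => (l v : ℚ)) = 2 * m

/-- The canonical class, defined by adjunction: `(K + E_v, E_v) = -2`. -/
def IsCanonical (M : Matrix V V ℤ) (K : V → ℚ) : Prop :=
  ∀ v, pairing M (K + baseE v) (baseE v) = -2

/-- The weight function `w(k) = -(k² + |V|)/8`. -/
def wfun (M : Matrix V V ℤ) (k : V → ℚ) : ℚ :=
  -(pairing M k k + Fintype.card V) / 8

/-- The weight of the cube `(k, I')`: `max_{J ⊆ I'} w(k + 2Σ_{j∈J} E_j)`. -/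
def cubeW (M : Matrix V V ℤ) (k : V → ℚ) (I' : Finset V) : ℚ :=
  I'.powerset.sup' (Finset.powerset_nonempty I') fun J => wfun M (k + 2 • ∑ j ∈ J, baseE j)

/-- `Σ_{I'⊆V} (-1)^{|I'|+1} w((k,I'))`. -/
def cubeSum (M : Matrix V V ℤ) (k : V → ℚ) : ℚ :=
  ∑ I' ∈ (Finset.univ : Finset V).powerset, (-1 : ℚ) ^ (I'.card + 1) * cubeW M k I'

/-- The matrix of the graph with the vertex `u` deleted. -/
def delMat (M : Matrix V V ℤ) (u : V) : Matrix {v : V // v ≠ u} {v : V // v ≠ u} ℤ :=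
  fun v w => M v.1 w.1

end Defs

/-- Extension by zero of a vector on the deleted-vertex index set. -/
def extZero {V : Type*} [DecidableEq V] {u : V} (x : {v : V // v ≠ u} → ℚ) : V → ℚ :=
  fun v => if h : v = u then 0 else x ⟨v, h⟩

/-!
Negative definiteness makes `x ↦ ((x, E_w))_w` injective. All these pairings vanish for
`x - i(R x)` except the one with `E_u`, so `x - i(R x)` is a multiple of `E_u^*`; since `E_u^*` is
orthogonal to the image of `i`, pairing with `E_u^*` identifies the coefficient. Similarly, by
adjunction `K_{Γ∖u}` and `R(K_Γ)` have the same pairing `-2 - (E_v, E_v)` with every `E_v`.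
-/

section Pairing

variable {V : Type*} [Fintype V] {M : Matrix V V ℤ}

lemma pairing_add_left (x y z : V → ℚ) :
    pairing M (x + y) z = pairing M x z + pairing M y z :=
  add_dotProduct _ _ _

lemma pairing_sub_left (x y z : V → ℚ) :
    pairing M (x - y) z = pairing M x z - pairing M y z :=
  sub_dotProduct _ _ _

lemma pairing_smul_left (c : ℚ) (x y : V → ℚ) :
    pairing M (c • x) y = c * pairing M x y :=
  smul_dotProduct _ _ _

lemma pairing_zero_left (y : V → ℚ) : pairing M 0 y = 0 :=
  zero_dotProduct _

lemma pairing_comm (hM : M.IsSymm) (x y : V → ℚ) : pairing M x y = pairing M y x := by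
  have hMq : (M.map fun m => (m : ℚ))ᵀ = M.map fun m => (m : ℚ) := by
    rw [← Matrix.transpose_map, hM.eq]
  rw [pairing, pairing, Matrix.dotProduct_mulVec, dotProduct_comm, ← Matrix.mulVec_transpose, hMq]

variable [DecidableEq V]

lemma pairing_baseE_right (x : V → ℚ) (w : V) :
    pairing M x (baseE w) = (x ᵥ* M.map fun m => (m : ℚ)) w := by
  rw [pairing, Matrix.dotProduct_mulVec, baseE, dotProduct_single_one]

lemma pairing_eq_sum_baseE_right (x y : V → ℚ) :
    pairing M x y = ∑ w, y w * pairing M x (baseE w) := by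
  simp only [pairing_baseE_right]
  rw [pairing, Matrix.dotProduct_mulVec, dotProduct]
  simp only [mul_comm]

lemma pairing_baseE_baseE (v w : V) : pairing M (baseE v) (baseE w) = M v w := by
  rw [pairing_baseE_right, baseE, Matrix.single_one_vecMul]
  simp

lemma NegDefinite.eq_of_pairing_baseE_eq (hM : NegDefinite M) {x y : V → ℚ}
    (h : ∀ w, pairing M x (baseE w) = pairing M y (baseE w)) : x = y := by
  by_contra hne
  have hsq : pairing M (x - y) (x - y) = 0 := by
    rw [pairing_eq_sum_baseE_right, Finset.sum_eq_zero]
    intro w _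
    rw [pairing_sub_left, h, sub_self, mul_zero]
  exact (hM _ (sub_ne_zero.mpr hne)).ne hsq

lemma IsCanonical.pairing_baseE {K : V → ℚ} (hK : IsCanonical M K) (v : V) :
    pairing M K (baseE v) = -2 - M v v := by
  have := hK v
  rw [pairing_add_left, pairing_baseE_baseE] at this
  linarith

section Antidual

variable {Estar : V → V → ℚ}

lemma IsAntidual.pairing_left (hE : IsAntidual M Estar) (v : V) (x : V → ℚ) :
    pairing M (Estar v) x = -x v := by
  simp [pairing_eq_sum_baseE_right _ x, hE v]

lemma IsAntidual.ne_zero (hE : IsAntidual M Estar) (v : V) : Estar v ≠ 0 := by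
  intro h
  simpa [h, pairing_zero_left] using hE v v

lemma IsAntidual.eq_smul_of_pairing_baseE_eq_zero (hM : NegDefinite M)
    (hE : IsAntidual M Estar) {u : V} {x : V → ℚ}
    (hx : ∀ w, w ≠ u → pairing M x (baseE w) = 0) :
    x = (-pairing M x (baseE u)) • Estar u := by
  refine hM.eq_of_pairing_baseE_eq fun w => ?_
  rw [pairing_smul_left, hE u w]
  by_cases hw : u = w
  · subst hw; simp
  · simp [hw, hx w (Ne.symm hw)]

end Antidual

end Pairing

section Deletion

variable {V : Type*} [DecidableEq V] {u : V}

lemma extZero_self (a : {v : V // v ≠ u} → ℚ) : extZero a u = 0 := by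
  simp [extZero]

lemma extZero_val (a : {v : V // v ≠ u} → ℚ) (v : {v : V // v ≠ u}) :
    extZero a v.1 = a v := by
  simp [extZero, v.2]

lemma extZero_zero : extZero (0 : {v : V // v ≠ u} → ℚ) = 0 := by
  funext v
  simp [extZero]

lemma extZero_injective : Function.Injective (extZero (u := u)) := fun a b h =>
  funext fun v => by rw [← extZero_val a, h, extZero_val]

lemma extZero_baseE (v : {v : V // v ≠ u}) : extZero (baseE v) = baseE v.1 := by
  funext w
  by_cases hw : w = u
  · subst hw; simp [extZero, baseE, Ne.symm v.2]
  · lift w to {v : V // v ≠ u} using hw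
    simp [extZero_val, baseE, Pi.single_apply, Subtype.ext_iff]

variable [Fintype V] {M : Matrix V V ℤ}

lemma pairing_extZero (a b : {v : V // v ≠ u} → ℚ) :
    pairing M (extZero a) (extZero b) = pairing (delMat M u) a b := by
  rw [pairing, pairing, Matrix.dot_mulVec_eq_sum_sum, Matrix.dot_mulVec_eq_sum_sum,
    Fintype.sum_eq_add_sum_subtype_ne _ u]
  simp only [extZero_self, mul_zero, Finset.sum_const_zero, zero_add]
  refine Finset.sum_congr rfl fun w _ => ?_
  rw [Fintype.sum_eq_add_sum_subtype_ne _ u]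
  simp [extZero_self, extZero_val, delMat]

lemma NegDefinite.delMat (hM : NegDefinite M) (u : V) : NegDefinite (delMat M u) := by
  intro x hx
  rw [← pairing_extZero]
  exact hM _ fun h => hx (extZero_injective (h.trans extZero_zero.symm))

lemma IsAntidual.pairing_extZero_right {Estar : V → V → ℚ} (hM : M.IsSymm)
    (hE : IsAntidual M Estar) (l : {v : V // v ≠ u} → ℚ) :
    pairing M (extZero l) (Estar u) = 0 := by
  rw [pairing_comm hM, hE.pairing_left, extZero_self, neg_zero]

end Deletion

def IsRestriction {V : Type*} [Fintype V] [DecidableEq V] (M : Matrix V V ℤ) (u : V)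
    (R : (V → ℚ) → ({v : V // v ≠ u} → ℚ)) : Prop :=
  ∀ x l, pairing (delMat M u) (R x) l = pairing M x (extZero l)

namespace IsRestriction

variable {V : Type*} [Fintype V] [DecidableEq V] {M : Matrix V V ℤ} {u : V}
  {R : (V → ℚ) → ({v : V // v ≠ u} → ℚ)}

lemma pairing_extZero_baseE (hR : IsRestriction M u R) (x : V → ℚ) (v : {v : V // v ≠ u}) :
    pairing M (extZero (R x)) (baseE v.1) = pairing M x (baseE v.1) := by
  rw [← extZero_baseE, pairing_extZero, hR]

lemma eq_extZero_add_smul_antidual {Estar : V → V → ℚ} (hM : M.IsSymm) (hneg : NegDefinite M)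
    (hE : IsAntidual M Estar) (hR : IsRestriction M u R) (x : V → ℚ) :
    x = extZero (R x) + (pairing M x (Estar u) / pairing M (Estar u) (Estar u)) • Estar u := by
  set a := -pairing M (x - extZero (R x)) (baseE u)
  have hdecomp : x - extZero (R x) = a • Estar u :=
    hE.eq_smul_of_pairing_baseE_eq_zero hneg fun w hw => by
      rw [pairing_sub_left, hR.pairing_extZero_baseE x ⟨w, hw⟩, sub_self]
  have hcoeff : pairing M x (Estar u) = a * pairing M (Estar u) (Estar u) := by
    have := congrArg (pairing M · (Estar u)) hdecomp
    simpa only [pairing_sub_left, pairing_smul_left, hE.pairing_extZero_right hM, sub_zero]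
      using this
  have hEE : pairing M (Estar u) (Estar u) ≠ 0 := (hneg _ (hE.ne_zero u)).ne
  rw [hcoeff, mul_div_cancel_right₀ _ hEE, ← hdecomp, add_sub_cancel]

lemma eq_apply_of_isCanonical {K : V → ℚ} {K0 : {v : V // v ≠ u} → ℚ} (hneg : NegDefinite M)
    (hR : IsRestriction M u R) (hK : IsCanonical M K) (hK0 : IsCanonical (delMat M u) K0) :
    K0 = R K :=
  (hneg.delMat u).eq_of_pairing_baseE_eq fun v => by
    rw [hK0.pairing_baseE, hR, extZero_baseE, hK.pairing_baseE, delMat]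

end IsRestriction

theorem restriction_decomposition_and_canonical_general
    (s : ℕ) (I : Matrix (Fin s) (Fin s) ℤ)
    (htree : IsPlumbingTree I)
    (u : Fin s)
    (Estar : Fin s → Fin s → ℚ) (hE : IsAntidual I Estar)
    (R : (Fin s → ℚ) → ({v : Fin s // v ≠ u} → ℚ))
    (hR : ∀ (x : Fin s → ℚ) (l : {v : Fin s // v ≠ u} → ℚ),
      pairing (delMat I u) (R x) l = pairing I x (extZero l))
    (K : Fin s → ℚ) (hK : IsCanonical I K)
    (K0 : {v : Fin s // v ≠ u} → ℚ) (hK0 : IsCanonical (delMat I u) K0) :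
    (∀ l'' : Fin s → ℚ,
        l'' = extZero (R l'')
          + (pairing I l'' (Estar u) / pairing I (Estar u) (Estar u)) • Estar u) ∧
    (∀ l : {v : Fin s // v ≠ u} → ℚ, pairing I (extZero l) (Estar u) = 0) ∧
    K0 = R K := by
  obtain ⟨⟨hsymm, hneg, -, -⟩, -⟩ := htree
  exact ⟨IsRestriction.eq_extZero_add_smul_antidual hsymm hneg hE hR,
    hE.pairing_extZero_right hsymm, IsRestriction.eq_apply_of_isCanonical hneg hR hK hK0⟩

/-- For an end-vertex `u`: `l'' = i(R(l'')) + ((l'', E_u^*)/(E_u^*, E_u^*))·E_u^*`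
for every `l'' ∈ L'(Γ)`, `(i(l), E_u^*) = 0` for every `l ∈ L'(Γ∖u)`, and
`K_{Γ∖u} = R(K_Γ)`. -/
theorem restriction_decomposition_and_canonical
    (s : ℕ) (hs : 2 ≤ s) (I : Matrix (Fin s) (Fin s) ℤ)
    (htree : IsPlumbingTree I)
    (u : Fin s) (hu : valency I u = 1)
    (Estar : Fin s → Fin s → ℚ) (hE : IsAntidual I Estar)
    (R : (Fin s → ℚ) → ({v : Fin s // v ≠ u} → ℚ))
    (hR : ∀ (x : Fin s → ℚ) (l : {v : Fin s // v ≠ u} → ℚ),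
      pairing (delMat I u) (R x) l = pairing I x (extZero l))
    (K : Fin s → ℚ) (hK : IsCanonical I K)
    (K0 : {v : Fin s // v ≠ u} → ℚ) (hK0 : IsCanonical (delMat I u) K0) :
    (∀ l'' : Fin s → ℚ,
        l'' = extZero (R l'')
          + (pairing I l'' (Estar u) / pairing I (Estar u) (Estar u)) • Estar u) ∧
    (∀ l : {v : Fin s // v ≠ u} → ℚ, pairing I (extZero l) (Estar u) = 0) ∧
    K0 = R K :=
  restriction_decomposition_and_canonical_general s I htree u Estar hE R hR K hK K0 hK0
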